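/- Let b, c, e ∈ ℂ with e ≠ 0, and let U ⊆ ℂ be a nonempty connected open set. If y : U → ℂ is holomorphic and satisfies both the linear equation (L2): (4ex³ + 2cx + b)y''' + (60ex² + 10c)y'' + 240exy' + 240ey = 0 and the nonlinear equation (NL2): 72exy² + (b + 2cx + 4ex³)(y')² + (14c + 84ex²)yy' + (b + 2cx + 4ex³)yy'' = 0 at every point of U, then y is identically zero on U. -/

import Mathlib

/-!
Write `p = b + 2cx + 4ex³`. Then (NL2) says `(p (y²)' + 6 p' y²)' = 0`, so
`p (y²)' + 6 p' y² = K` on `U`, and then `(p⁶ y²)' = K p⁵` gives `p⁶ y² = K P + C₀` with `P' = p⁵`.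
Eliminating `y'`, `y''`, `y'''` between (NL2), its derivative, (L2) and the first integral leaves a
cubic relation between `K`, `p` and `y²`. Substituting `y² = (K P + C₀) / p⁶` turns it into a
polynomial identity in `x` which holds on `U`, hence identically. Its coefficient of `x⁵⁴` is a
nonzero multiple of `e¹⁸ K³`, so `K = 0`; what is left is `C₀³` times a polynomial of degree 6,
so `C₀ = 0`, and `p⁶ y² = 0` forces `y = 0`.
-/

open Polynomial

namespace Polynomial

section HasTopCoeff

variable {R : Type*} [CommRing R]

def HasTopCoeff (p : R[X]) (d : ℕ) (a : R) : Prop :=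
  p.natDegree ≤ d ∧ p.coeff d = a

theorem hasTopCoeff_C (r : R) : HasTopCoeff (C r) 0 r :=
  ⟨(natDegree_C r).le, coeff_C_zero⟩

namespace HasTopCoeff

variable {p q : R[X]} {m n : ℕ} {a b : R}

theorem of_natDegree_lt (h : p.natDegree < n) : HasTopCoeff p n 0 :=
  ⟨h.le, coeff_eq_zero_of_natDegree_lt h⟩

theorem C_mul (hp : HasTopCoeff p n a) (r : R) : HasTopCoeff (C r * p) n (r * a) :=
  ⟨(natDegree_C_mul_le r p).trans hp.1, by rw [coeff_C_mul, hp.2]⟩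

theorem add (hp : HasTopCoeff p n a) (hq : HasTopCoeff q n b) :
    HasTopCoeff (p + q) n (a + b) :=
  ⟨natDegree_add_le_of_degree_le hp.1 hq.1, by rw [coeff_add, hp.2, hq.2]⟩

theorem sub (hp : HasTopCoeff p n a) (hq : HasTopCoeff q n b) :
    HasTopCoeff (p - q) n (a - b) :=
  ⟨(natDegree_sub_le_of_le hp.1 hq.1).trans (max_self n).le, by rw [coeff_sub, hp.2, hq.2]⟩

theorem mul (hp : HasTopCoeff p m a) (hq : HasTopCoeff q n b) :
    HasTopCoeff (p * q) (m + n) (a * b) :=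
  ⟨natDegree_mul_le.trans (add_le_add hp.1 hq.1), by
    rw [coeff_mul_add_eq_of_natDegree_le hp.1 hq.1, hp.2, hq.2]⟩

theorem pow (hp : HasTopCoeff p n a) (k : ℕ) : HasTopCoeff (p ^ k) (k * n) (a ^ k) :=
  ⟨natDegree_pow_le.trans (Nat.mul_le_mul_left k hp.1), by
    rw [coeff_pow_of_natDegree_le hp.1, hp.2]⟩

theorem derivative (hp : HasTopCoeff p (n + 1) a) :
    HasTopCoeff (derivative p) n (a * (n + 1)) :=
  ⟨(natDegree_derivative_le p).trans (by have := hp.1; omega), by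
    rw [coeff_derivative, hp.2]⟩

theorem of_derivative {𝕜 : Type*} [Field 𝕜] [CharZero 𝕜] {p : 𝕜[X]} {a : 𝕜}
    (hp : HasTopCoeff (Polynomial.derivative p) n a) : HasTopCoeff p (n + 1) (a / (n + 1)) := by
  have hcoeff (k : ℕ) : p.coeff (k + 1) = (Polynomial.derivative p).coeff k / (k + 1) := by
    rw [coeff_derivative, mul_div_cancel_right₀ _ (Nat.cast_add_one_ne_zero k)]
  refine ⟨natDegree_le_iff_coeff_eq_zero.mpr fun N hN => ?_, by rw [hcoeff, hp.2]⟩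
  obtain ⟨k, rfl⟩ := Nat.exists_eq_add_of_lt hN
  rw [hcoeff, coeff_eq_zero_of_natDegree_lt (by have := hp.1; omega), zero_div]

end HasTopCoeff

end HasTopCoeff

theorem exists_derivative_eq {𝕜 : Type*} [Field 𝕜] [CharZero 𝕜] (q : 𝕜[X]) :
    ∃ P, derivative P = q := by
  induction q using Polynomial.induction_on' with
  | add p q hp hq =>
    obtain ⟨P, rfl⟩ := hp
    obtain ⟨Q, rfl⟩ := hq
    exact ⟨P + Q, derivative_add⟩
  | monomial n a =>
    refine ⟨monomial (n + 1) (a / (n + 1)), ?_⟩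
    rw [derivative_monomial, Nat.add_sub_cancel, Nat.cast_add_one,
      div_mul_cancel₀ _ (Nat.cast_add_one_ne_zero n)]

theorem eq_zero_of_forall_eval_eq_zero_of_isOpen {𝕜 : Type*} [NontriviallyNormedField 𝕜]
    {q : 𝕜[X]} {V : Set 𝕜} (hV : IsOpen V) (hne : V.Nonempty) (h : ∀ x ∈ V, q.eval x = 0) :
    q = 0 := by
  obtain ⟨x, hx⟩ := hne
  exact q.eq_zero_of_infinite_isRoot ((infinite_of_mem_nhds x (hV.mem_nhds hx)).mono h)

theorem eq_zero_of_eval_mul_eq_zero {𝕜 : Type*} [NontriviallyNormedField 𝕜] {q : 𝕜[X]}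
    (hq : q ≠ 0) {f : 𝕜 → 𝕜} {V : Set 𝕜} (hV : IsOpen V) (hf : ContinuousOn f V)
    (h : ∀ x ∈ V, q.eval x * f x = 0) : ∀ x ∈ V, f x = 0 := by
  intro x hx
  by_contra hfx
  refine hq (eq_zero_of_forall_eval_eq_zero_of_isOpen
    (hf.isOpen_inter_preimage hV isOpen_compl_singleton) ⟨x, hx, hfx⟩ ?_)
  rintro t ⟨ht, hft⟩
  exact (mul_eq_zero.mp (h t ht)).resolve_right hft

section CubicForm

variable {R : Type*} [CommRing R]

/-- `p¹⁸` times the cubic `3K³ - 22K²p'u + 24K(p'² + pp'')u² + (56p²p''' - 72pp'p'')u³`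
at `u = L / p⁶`. -/
noncomputable def cubicForm (p L : R[X]) (K : R) : R[X] :=
  C (3 * K ^ 3) * p ^ 18 - C (22 * K ^ 2) * derivative p * p ^ 12 * L
    + C (24 * K) * (derivative p ^ 2 + p * derivative^[2] p) * p ^ 6 * L ^ 2
    + (C 56 * p ^ 2 * derivative^[3] p - C 72 * p * derivative p * derivative^[2] p) * L ^ 3

theorem cubicForm_zero (p L : R[X]) :
    cubicForm p L 0
      = (C 56 * p ^ 2 * derivative^[3] p - C 72 * p * derivative p * derivative^[2] p) * L ^ 3 := by
  simp [cubicForm]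

variable {p L : R[X]} {a l : R}

theorem hasTopCoeff_cubicForm (hp : HasTopCoeff p 3 a) (hL : HasTopCoeff L 16 l) (K : R) :
    HasTopCoeff (cubicForm p L K) 54
      (3 * K ^ 3 * a ^ 18 - 66 * K ^ 2 * a ^ 13 * l + 360 * K * a ^ 8 * l ^ 2
        - 960 * a ^ 3 * l ^ 3) := by
  have hp₁ := hp.derivative
  have hp₂ := hp₁.derivative
  have := ((((hp.pow 18).C_mul (3 * K ^ 3)).sub
    ((((hp₁.C_mul (22 * K ^ 2)).mul (hp.pow 12)).mul hL))).add
    ((((((hp₁.pow 2).add (hp.mul hp₂)).C_mul (24 * K)).mul (hp.pow 6)).mul (hL.pow 2)))).add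
    (((((hp.pow 2).C_mul 56).mul hp₂.derivative).sub (((hp.C_mul 72).mul hp₁).mul hp₂)).mul
      (hL.pow 3))
  rw [cubicForm]
  simp only [Function.iterate_succ_apply', Function.iterate_zero_apply]
  convert this using 1
  push_cast
  ring

theorem hasTopCoeff_cubicForm_zero (hp : HasTopCoeff p 3 a) (r : R) :
    HasTopCoeff (cubicForm p (C r) 0) 6 (-960 * a ^ 3 * r ^ 3) := by
  have hp₁ := hp.derivative
  have hp₂ := hp₁.derivative
  have := ((((hp.pow 2).C_mul 56).mul hp₂.derivative).sub (((hp.C_mul 72).mul hp₁).mul hp₂)).mul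
    ((hasTopCoeff_C r).pow 3)
  rw [cubicForm_zero]
  simp only [Function.iterate_succ_apply', Function.iterate_zero_apply]
  convert this using 1
  push_cast
  ring

end CubicForm

theorem eq_zero_of_cubicForm_eq_zero {𝕜 : Type*} [Field 𝕜] [CharZero 𝕜] {p P : 𝕜[X]}
    {a K C₀ : 𝕜} (hp : HasTopCoeff p 3 a) (ha : a ≠ 0) (hP : derivative P = p ^ 5)
    (h : cubicForm p (C K * P + C C₀) K = 0) : K = 0 ∧ C₀ = 0 := by
  have hP' : HasTopCoeff P 16 (a ^ 5 / 16) := by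
    have : HasTopCoeff (derivative P) (5 * 3) (a ^ 5) := hP ▸ hp.pow 5
    convert this.of_derivative using 1
    norm_num
  have hL : HasTopCoeff (C K * P + C C₀) 16 (K * (a ^ 5 / 16) + 0) :=
    (hP'.C_mul K).add (.of_natDegree_lt ((natDegree_C C₀).trans_lt (by norm_num)))
  have hK : K = 0 := by
    have h54 := (hasTopCoeff_cubicForm hp hL K).2
    rw [h, coeff_zero] at h54
    have : a ^ 18 * K ^ 3 = 0 := by linear_combination (-64 / 3 : 𝕜) * h54
    simpa [ha] using this
  subst hK
  rw [C_0, zero_mul, zero_add] at h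
  have h6 := (hasTopCoeff_cubicForm_zero hp C₀).2
  rw [h, coeff_zero] at h6
  exact ⟨rfl, by simpa [ha] using h6.symm⟩

end Polynomial

theorem cubic_relation_of_odes {R : Type*} [CommRing R] {p₀ p₁ p₂ p₃ y₀ y₁ y₂ y₃ K L : R}
    (hNL : p₀ * y₀ * y₂ + p₀ * y₁ ^ 2 + 7 * p₁ * y₀ * y₁ + 3 * p₂ * y₀ ^ 2 = 0)
    (hNL' : p₀ * y₀ * y₃ + 3 * p₀ * y₁ * y₂ + 8 * p₁ * y₀ * y₂ + 8 * p₁ * y₁ ^ 2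
      + 13 * p₂ * y₀ * y₁ + 3 * p₃ * y₀ ^ 2 = 0)
    (hLin : p₀ * y₃ + 5 * p₁ * y₂ + 10 * p₂ * y₁ + 10 * p₃ * y₀ = 0)
    (hK : p₀ * (2 * (y₀ * y₁)) + 6 * (p₁ * y₀ ^ 2) = K)
    (hL : p₀ ^ 6 * y₀ ^ 2 = L) :
    3 * K ^ 3 * p₀ ^ 18 - 22 * K ^ 2 * p₁ * p₀ ^ 12 * L
      + 24 * K * (p₁ ^ 2 + p₀ * p₂) * p₀ ^ 6 * L ^ 2
      + (56 * p₀ ^ 2 * p₃ - 72 * p₀ * p₁ * p₂) * L ^ 3 = 0 := by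
  have hy₃ : 3 * p₀ * y₁ * y₂ + 3 * p₁ * y₀ * y₂ + 8 * p₁ * y₁ ^ 2 + 3 * p₂ * y₀ * y₁
      - 7 * p₃ * y₀ ^ 2 = 0 := by
    linear_combination hNL' - y₀ * hLin
  have hy₂ : 3 * p₀ ^ 2 * y₁ ^ 3 + 16 * p₀ * p₁ * y₀ * y₁ ^ 2
      + (6 * p₀ * p₂ + 21 * p₁ ^ 2) * y₀ ^ 2 * y₁ + (9 * p₁ * p₂ + 7 * p₀ * p₃) * y₀ ^ 3 = 0 := by
    linear_combination (3 * p₀ * y₁ + 3 * p₁ * y₀) * hNL - (p₀ * y₀) * hy₃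
  subst hK hL
  linear_combination 8 * p₀ ^ 19 * y₀ ^ 3 * hy₂

theorem hasDerivAt_iterate_deriv {U : Set ℂ} {y : ℂ → ℂ} (hU : IsOpen U)
    (hy : DifferentiableOn ℂ y U) {x : ℂ} (hx : x ∈ U) (n : ℕ) :
    HasDerivAt (deriv^[n] y) (deriv^[n + 1] y x) x := by
  rw [Function.iterate_succ_apply']
  exact ((hy.analyticOnNhd hU).iterated_deriv n x hx).differentiableAt.hasDerivAt

/-- (NL2) and (L2) are `nlForm p y x = 0` and `linForm p y x = 0` for `p = b + 2cX + 4eX³`. -/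
noncomputable def nlForm (p : ℂ[X]) (y : ℂ → ℂ) (x : ℂ) : ℂ :=
  p.eval x * y x * deriv^[2] y x + p.eval x * deriv y x ^ 2
    + 7 * (derivative p).eval x * y x * deriv y x + 3 * (derivative^[2] p).eval x * y x ^ 2

noncomputable def linForm (p : ℂ[X]) (y : ℂ → ℂ) (x : ℂ) : ℂ :=
  p.eval x * deriv^[3] y x + 5 * (derivative p).eval x * deriv^[2] y x
    + 10 * (derivative^[2] p).eval x * deriv y x + 10 * (derivative^[3] p).eval x * y x

section ODE

variable {p : ℂ[X]} {U : Set ℂ} {y : ℂ → ℂ}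

theorem exists_first_integral (hU : IsOpen U) (hU' : IsPreconnected U)
    (hy : DifferentiableOn ℂ y U) (hNL : ∀ x ∈ U, nlForm p y x = 0) :
    ∃ K, ∀ x ∈ U, p.eval x * (2 * (y x * deriv y x))
      + 6 * ((derivative p).eval x * y x ^ 2) = K := by
  have hderiv (x : ℂ) (hx : x ∈ U) : HasDerivAt (fun t => p.eval t * (2 * (y t * deriv y t))
      + 6 * ((derivative p).eval t * y t ^ 2)) 0 x := by
    have h₀ : HasDerivAt y (deriv y x) x := hasDerivAt_iterate_deriv hU hy hx 0
    have h₁ : HasDerivAt (deriv y) (deriv^[2] y x) x := hasDerivAt_iterate_deriv hU hy hx 1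
    refine (((p.hasDerivAt x).mul ((h₀.mul h₁).const_mul 2)).add
      ((((derivative p).hasDerivAt x).mul (h₀.pow 2)).const_mul 6)).congr_deriv ?_
    have := hNL x hx
    simp only [nlForm, Function.iterate_succ_apply', Function.iterate_zero_apply, Pi.mul_apply,
      Pi.pow_apply] at this ⊢
    linear_combination 2 * this
  exact hU.exists_is_const_of_deriv_eq_zero hU'
    (fun x hx => (hderiv x hx).differentiableAt.differentiableWithinAt)
    (fun x hx => (hderiv x hx).deriv)

theorem nlForm_deriv_eq_zero (hU : IsOpen U) (hy : DifferentiableOn ℂ y U)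
    (hNL : ∀ x ∈ U, nlForm p y x = 0) {x : ℂ} (hx : x ∈ U) :
    p.eval x * y x * deriv^[3] y x + 3 * p.eval x * deriv y x * deriv^[2] y x
      + 8 * (derivative p).eval x * y x * deriv^[2] y x + 8 * (derivative p).eval x * deriv y x ^ 2
      + 13 * (derivative^[2] p).eval x * y x * deriv y x
      + 3 * (derivative^[3] p).eval x * y x ^ 2 = 0 := by
  have h₀ : HasDerivAt y (deriv y x) x := hasDerivAt_iterate_deriv hU hy hx 0
  have h₁ : HasDerivAt (deriv y) (deriv^[2] y x) x := hasDerivAt_iterate_deriv hU hy hx 1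
  have h₂ : HasDerivAt (deriv^[2] y) (deriv^[3] y x) x := hasDerivAt_iterate_deriv hU hy hx 2
  have hderiv := (((((p.hasDerivAt x).mul h₀).mul h₂).add ((p.hasDerivAt x).mul (h₁.pow 2))).add
    (((((derivative p).hasDerivAt x).const_mul 7).mul h₀).mul h₁)).add
    ((((derivative^[2] p).hasDerivAt x).const_mul 3).mul (h₀.pow 2))
  have hzero := hderiv.unique <| (hasDerivAt_const x (0 : ℂ)).congr_of_eventuallyEq <| by
    filter_upwards [hU.mem_nhds hx] with t ht using hNL t ht
  simp only [Function.iterate_succ_apply', Function.iterate_zero_apply, Pi.mul_apply,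
    Pi.pow_apply] at hzero ⊢
  linear_combination hzero

theorem exists_second_integral (hU : IsOpen U) (hU' : IsPreconnected U)
    (hy : DifferentiableOn ℂ y U) {P : ℂ[X]} (hP : derivative P = p ^ 5) {K : ℂ}
    (hK : ∀ x ∈ U, p.eval x * (2 * (y x * deriv y x)) + 6 * ((derivative p).eval x * y x ^ 2) = K) :
    ∃ C₀, ∀ x ∈ U, p.eval x ^ 6 * y x ^ 2 = K * P.eval x + C₀ := by
  have hderiv (x : ℂ) (hx : x ∈ U) :
      HasDerivAt (fun t => p.eval t ^ 6 * y t ^ 2 - K * P.eval t) 0 x := by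
    have h₀ : HasDerivAt y (deriv y x) x := hasDerivAt_iterate_deriv hU hy hx 0
    refine ((((p.hasDerivAt x).pow 6).mul (h₀.pow 2)).sub
      ((P.hasDerivAt x).const_mul K)).congr_deriv ?_
    rw [hP, eval_pow]
    simp only [Pi.pow_apply]
    linear_combination p.eval x ^ 5 * hK x hx
  obtain ⟨C₀, hC₀⟩ := hU.exists_is_const_of_deriv_eq_zero hU'
    (fun x hx => (hderiv x hx).differentiableAt.differentiableWithinAt)
    (fun x hx => (hderiv x hx).deriv)
  exact ⟨C₀, fun x hx => by linear_combination hC₀ x hx⟩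

theorem eval_cubicForm_eq_zero (hU : IsOpen U) (hy : DifferentiableOn ℂ y U)
    (hNL : ∀ x ∈ U, nlForm p y x = 0) (hL : ∀ x ∈ U, linForm p y x = 0) {K C₀ : ℂ} {P : ℂ[X]}
    (hK : ∀ x ∈ U, p.eval x * (2 * (y x * deriv y x)) + 6 * ((derivative p).eval x * y x ^ 2) = K)
    (hC₀ : ∀ x ∈ U, p.eval x ^ 6 * y x ^ 2 = K * P.eval x + C₀) {x : ℂ} (hx : x ∈ U) :
    (cubicForm p (C K * P + C C₀) K).eval x = 0 := by
  have := cubic_relation_of_odes (hNL x hx) (nlForm_deriv_eq_zero hU hy hNL hx) (hL x hx)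
    (hK x hx) (hC₀ x hx)
  simp only [cubicForm, eval_add, eval_sub, eval_mul, eval_pow, eval_C]
  linear_combination this

theorem eq_zero_of_odes_of_cubic {a : ℂ} (hp : HasTopCoeff p 3 a) (ha : a ≠ 0)
    (hU : IsOpen U) (hU' : IsConnected U) (hy : DifferentiableOn ℂ y U)
    (hNL : ∀ x ∈ U, nlForm p y x = 0) (hL : ∀ x ∈ U, linForm p y x = 0) :
    ∀ x ∈ U, y x = 0 := by
  obtain ⟨K, hK⟩ := exists_first_integral hU hU'.isPreconnected hy hNL
  obtain ⟨P, hP⟩ := exists_derivative_eq (p ^ 5)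
  obtain ⟨C₀, hC₀⟩ := exists_second_integral hU hU'.isPreconnected hy hP hK
  have hF : cubicForm p (C K * P + C C₀) K = 0 :=
    eq_zero_of_forall_eval_eq_zero_of_isOpen hU hU'.nonempty
      fun x hx => eval_cubicForm_eq_zero hU hy hNL hL hK hC₀ hx
  obtain ⟨rfl, rfl⟩ := eq_zero_of_cubicForm_eq_zero hp ha hP hF
  have hp₀ : p ≠ 0 := by
    rintro rfl
    exact ha (hp.2.symm.trans (coeff_zero 3))
  have hy₀ := eq_zero_of_eval_mul_eq_zero (pow_ne_zero 6 hp₀) hU (hy.continuousOn.pow 2)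
    fun x hx => by simpa using hC₀ x hx
  exact fun x hx => pow_eq_zero_iff two_ne_zero |>.mp (hy₀ x hx)

end ODE

/-- Let `b, c, e ∈ ℂ` with `e ≠ 0` and let `U ⊆ ℂ` be a nonempty
connected open set. If `y` is holomorphic on `U` and satisfies both the linear
equation (L2): `(4ex³+2cx+b)y''' + (60ex²+10c)y'' + 240exy' + 240ey = 0` and the
nonlinear equation (NL2):
`72exy² + (b+2cx+4ex³)(y')² + (14c+84ex²)yy' + (b+2cx+4ex³)yy'' = 0`
at every point of `U`, then `y` is identically zero on `U`. -/
theorem statement18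
    (b c e : ℂ) (he : e ≠ 0)
    (U : Set ℂ) (hU : IsOpen U) (hUconn : IsConnected U)
    (y : ℂ → ℂ) (hy : DifferentiableOn ℂ y U)
    (hL2 : ∀ x ∈ U,
      (4 * e * x ^ 3 + 2 * c * x + b) * iteratedDeriv 3 y x
        + (60 * e * x ^ 2 + 10 * c) * iteratedDeriv 2 y x
        + 240 * e * x * deriv y x
        + 240 * e * y x = 0)
    (hNL2 : ∀ x ∈ U,
      72 * e * x * (y x) ^ 2
        + (b + 2 * c * x + 4 * e * x ^ 3) * (deriv y x) ^ 2
        + (14 * c + 84 * e * x ^ 2) * y x * deriv y x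
        + (b + 2 * c * x + 4 * e * x ^ 3) * y x * iteratedDeriv 2 y x = 0) :
    ∀ x ∈ U, y x = 0 := by
  have hp : HasTopCoeff (C b + C (2 * c) * X + C (4 * e) * X ^ 3) 3 (4 * e) := by
    refine ⟨by compute_degree, ?_⟩
    simp only [coeff_add, coeff_C_mul, coeff_X_pow, coeff_C, coeff_X]
    norm_num
  refine eq_zero_of_odes_of_cubic hp (mul_ne_zero (by norm_num) he) hU hUconn hy
    (fun x hx => ?_) (fun x hx => ?_) <;> [have := hNL2 x hx; have := hL2 x hx] <;>
  · simp only [nlForm, linForm, iteratedDeriv_eq_iterate, Function.iterate_succ_apply',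
      Function.iterate_zero_apply, derivative_add, derivative_C, derivative_C_mul_X,
      derivative_C_mul_X_pow, derivative_zero, eval_add, eval_mul, eval_C, eval_X, eval_pow,
      eval_zero] at this ⊢
    linear_combination this
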